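/- Fix λ > 0, γ ≥ 0, and p a probability distribution on ℝ^d with bounded support. Suppose W is a positive definite matrix with (1/2)I ⪯ E_{x∼p}[(W x xᵀ W)/(1+γ‖W x‖)] + λW ⪯ 2I, and let W* be the unique positive definite solution of the corresponding fixed-point equation E[(W x xᵀ W)/(1+γ‖W x‖)] + λW = I. Then (1/4)W² ⪯ (W*)² ⪯ 4W². -/

import Mathlib

open MeasureTheory Matrix
open scoped Classical

/-!
Write `G(M)` for `FJDP p γ lam M`. Its quadratic form is superhomogeneous along matched pairs:
if `‖M x‖ ≤ σ ‖N x‖` for all `x`, `σ ≥ 1` and `M u = σ N w`, then `σ wᵀG(N)w ≤ uᵀG(M)u`.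
Pointwise, the square gains `σ²` while the weight `(1 + γ‖·‖)⁻¹` loses at most a factor `σ`;
the linear term needs `wᵀNw ≤ uᵀNw`, which is Cauchy–Schwarz once `M ⪯ σN`.

Hence `G(X) ⪯ I ⪯ G(Y)` forces `X² ⪯ Y²`: otherwise `σ = ‖XY⁻¹‖ > 1`, a top singular pair of
`XY⁻¹` gives unit vectors with `X u = σ Y w`, and `σ ≤ σ wᵀG(Y)w ≤ uᵀG(X)u ≤ 1`.
The theorem follows from `G(W/2) ⪯ G(W)/2 ⪯ I = G(W*) ⪯ 2 G(W) ⪯ G(2W)`.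
-/

/-- Euclidean norm on `Fin d → ℝ`. -/
noncomputable def enorm' {d : ℕ} (v : Fin d → ℝ) : ℝ := Real.sqrt (∑ i, (v i)^2)

/-- Euclidean inner product on `Fin d → ℝ`. -/
noncomputable def einner' {d : ℕ} (v w : Fin d → ℝ) : ℝ := ∑ i, v i * w i

/-- Operator (spectral) norm of a real matrix. -/
noncomputable def opNorm {d : ℕ} (M : Matrix (Fin d) (Fin d) ℝ) : ℝ :=
  ‖(Matrix.toEuclideanCLM (𝕜 := ℝ) M :
      EuclideanSpace ℝ (Fin d) →L[ℝ] EuclideanSpace ℝ (Fin d))‖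

/-- Positive semidefinite square root (junk value `0` on non-PSD matrices). -/
noncomputable def psqrt {d : ℕ} (A : Matrix (Fin d) (Fin d) ℝ) : Matrix (Fin d) (Fin d) ℝ :=
  if h : A.PosSemidef then
    h.1.eigenvectorUnitary.1 * diagonal ((↑) ∘ (√·) ∘ h.1.eigenvalues) *
      (star h.1.eigenvectorUnitary : Matrix (Fin d) (Fin d) ℝ)
  else 0

/-- Entrywise expectation of a matrix-valued function. -/
noncomputable def mExp {d : ℕ} (p : Measure (Fin d → ℝ))
    (f : (Fin d → ℝ) → Matrix (Fin d) (Fin d) ℝ) : Matrix (Fin d) (Fin d) ℝ :=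
  Matrix.of fun i j => ∫ x, f x i j ∂p

/-- The LDP operator `F(U) = E[(U x xᵀ U)/‖U x‖ · 1{x ≠ 0}] + λ U`. -/
noncomputable def FLDP {d : ℕ} (p : Measure (Fin d → ℝ)) (lam : ℝ)
    (U : Matrix (Fin d) (Fin d) ℝ) : Matrix (Fin d) (Fin d) ℝ :=
  mExp p (fun x => if x = 0 then 0
    else (enorm' (U.mulVec x))⁻¹ • vecMulVec (U.mulVec x) (U.mulVec x)) + lam • U

/-- The DP operator `G(W) = E[(W x xᵀ W)/(1 + γ‖W x‖)] + λ W`. -/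
noncomputable def FJDP {d : ℕ} (p : Measure (Fin d → ℝ)) (γ lam : ℝ)
    (W : Matrix (Fin d) (Fin d) ℝ) : Matrix (Fin d) (Fin d) ℝ :=
  mExp p (fun x => (1 + γ * enorm' (W.mulVec x))⁻¹ • vecMulVec (W.mulVec x) (W.mulVec x))
    + lam • W

/-- `sym(A) = (Aᵀ A)^{1/2}`. -/
noncomputable def symMat {d : ℕ} (A : Matrix (Fin d) (Fin d) ℝ) : Matrix (Fin d) (Fin d) ℝ :=
  psqrt (Aᵀ * A)

/-- Smallest eigenvalue of a Hermitian matrix (junk value `0` otherwise). -/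
noncomputable def lmin {d : ℕ} (A : Matrix (Fin d) (Fin d) ℝ) : ℝ :=
  if h : A.IsHermitian then ⨅ i, h.eigenvalues i else 0

/-- Largest eigenvalue of a Hermitian matrix (junk value `0` otherwise). -/
noncomputable def lmax {d : ℕ} (A : Matrix (Fin d) (Fin d) ℝ) : ℝ :=
  if h : A.IsHermitian then ⨆ i, h.eigenvalues i else 0

namespace Matrix

variable {n : Type*} [Fintype n] {M X Y : Matrix n n ℝ}

lemma IsHermitian.dotProduct_mulVec_comm (hM : M.IsHermitian) (x y : n → ℝ) :
    x ⬝ᵥ M *ᵥ y = M *ᵥ x ⬝ᵥ y := by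
  rw [dotProduct_mulVec, ← mulVec_transpose, ← conjTranspose_eq_transpose_of_trivial, hM.eq]

lemma dotProduct_mulVec_le_of_posSemidef_sub {A B : Matrix n n ℝ} (h : (B - A).PosSemidef)
    (v : n → ℝ) : v ⬝ᵥ A *ᵥ v ≤ v ⬝ᵥ B *ᵥ v := by
  simpa [sub_mulVec] using h.dotProduct_mulVec_nonneg v

lemma PosSemidef.dotProduct_mulVec_sq_le [DecidableEq n] (hM : M.PosSemidef) (x y : n → ℝ) :
    (x ⬝ᵥ M *ᵥ y) ^ 2 ≤ (x ⬝ᵥ M *ᵥ x) * (y ⬝ᵥ M *ᵥ y) := by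
  have := (toBilin' M).apply_mul_apply_le_of_forall_zero_le
    (fun v => by simpa [toBilin'_apply'] using hM.dotProduct_mulVec_nonneg v) x y
  simp only [toBilin'_apply'] at this
  rwa [hM.isHermitian.dotProduct_mulVec_comm y, dotProduct_comm _ x, ← sq] at this

open scoped MatrixOrder in
lemma IsHermitian.exists_eigenvector_dotProduct_mulVec_le [DecidableEq n] [Nonempty n]
    (hM : M.IsHermitian) :
    ∃ (t : ℝ) (u : n → ℝ), u ⬝ᵥ u = 1 ∧ M *ᵥ u = t • u ∧
      ∀ v, v ⬝ᵥ M *ᵥ v ≤ t * (v ⬝ᵥ v) := by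
  obtain ⟨i, hi⟩ := Finite.exists_max hM.eigenvalues
  refine ⟨hM.eigenvalues i, hM.eigenvectorBasis i, ?_, hM.mulVec_eigenvectorBasis i, fun v => ?_⟩
  · have h : inner ℝ (hM.eigenvectorBasis i) (hM.eigenvectorBasis i) = 1 := by
      rw [real_inner_self_eq_norm_sq, hM.eigenvectorBasis.orthonormal.1 i, one_pow]
    rw [EuclideanSpace.inner_eq_star_dotProduct] at h
    simpa using h
  · have hle : (algebraMap ℝ (Matrix n n ℝ) (hM.eigenvalues i) - M).PosSemidef := by
      refine (le_algebraMap_iff_spectrum_le hM.isSelfAdjoint).2 ?_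
      rw [hM.spectrum_real_eq_range_eigenvalues]
      rintro _ ⟨j, rfl⟩
      exact hi j
    have := hle.dotProduct_mulVec_nonneg v
    simpa [sub_mulVec, Algebra.algebraMap_eq_smul_one, smul_mulVec] using this

lemma posSemidef_sub_of_forall_mulVec_dotProduct_le [DecidableEq n] (hX : X.IsHermitian)
    (hY : Y.PosSemidef) (h : ∀ z, X *ᵥ z ⬝ᵥ X *ᵥ z ≤ Y *ᵥ z ⬝ᵥ Y *ᵥ z) :
    (Y - X).PosSemidef := by
  rcases isEmpty_or_nonempty n with hn | hn
  · exact .of_dotProduct_mulVec_nonneg (hY.isHermitian.sub hX) fun v => by simp [dotProduct]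
  obtain ⟨t, u, hu, hXYu, hle⟩ := (hX.sub hY.isHermitian).exists_eigenvector_dotProduct_mulVec_le
  have ht : t ≤ 0 := by
    have hXu : X *ᵥ u = Y *ᵥ u + t • u := by
      rw [← hXYu, sub_mulVec, add_sub_cancel]
    have := h u
    rw [hXu] at this
    simp only [add_dotProduct, dotProduct_add, smul_dotProduct, dotProduct_smul, smul_eq_mul,
      dotProduct_comm u, hu] at this
    have hYu := hY.dotProduct_mulVec_nonneg u
    rw [star_trivial, dotProduct_comm] at hYu
    nlinarith
  refine .of_dotProduct_mulVec_nonneg (hY.isHermitian.sub hX) fun v => ?_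
  have := hle v
  simp only [sub_mulVec, dotProduct_sub, star_trivial] at this ⊢
  have hv : 0 ≤ v ⬝ᵥ v := by simpa using dotProduct_star_self_nonneg v
  nlinarith

lemma posSemidef_sq_sub_sq_of_forall_mulVec_dotProduct_le [DecidableEq n] (hX : X.IsHermitian)
    (hY : Y.IsHermitian) (h : ∀ z, X *ᵥ z ⬝ᵥ X *ᵥ z ≤ Y *ᵥ z ⬝ᵥ Y *ᵥ z) :
    (Y ^ 2 - X ^ 2).PosSemidef := by
  refine .of_dotProduct_mulVec_nonneg ((hY.pow 2).sub (hX.pow 2)) fun z => ?_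
  simp only [star_trivial, sub_mulVec, dotProduct_sub, sq, ← mulVec_mulVec,
    hX.dotProduct_mulVec_comm z, hY.dotProduct_mulVec_comm z, sub_nonneg]
  exact h z

lemma exists_mulVec_eq_smul_mulVec_of_exists_lt [DecidableEq n] (hX : X.IsHermitian)
    (hY : Y.PosDef) (h : ∃ z, Y *ᵥ z ⬝ᵥ Y *ᵥ z < X *ᵥ z ⬝ᵥ X *ᵥ z) :
    ∃ σ > 1, ∃ u w : n → ℝ, u ⬝ᵥ u = 1 ∧ w ⬝ᵥ w = 1 ∧ X *ᵥ u = σ • Y *ᵥ w ∧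
      ∀ z, X *ᵥ z ⬝ᵥ X *ᵥ z ≤ σ ^ 2 * (Y *ᵥ z ⬝ᵥ Y *ᵥ z) := by
  obtain ⟨z, hz⟩ := h
  have : Nonempty n := by
    by_contra hn
    rw [not_nonempty_iff] at hn
    simp [dotProduct] at hz
  have hYdet : IsUnit Y.det := (isUnit_iff_isUnit_det Y).1 hY.isUnit
  set A := X * Y⁻¹
  obtain ⟨t, w, hw, hAw, hle⟩ :=
    (isHermitian_conjTranspose_mul_self A).exists_eigenvector_dotProduct_mulVec_le
  have hAY (z : n → ℝ) : A *ᵥ (Y *ᵥ z) = X *ᵥ z := by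
    rw [mulVec_mulVec, mul_assoc, nonsing_inv_mul _ hYdet, mul_one]
  have hquad (v : n → ℝ) : v ⬝ᵥ (Aᴴ * A) *ᵥ v = A *ᵥ v ⬝ᵥ A *ᵥ v := by
    rw [← mulVec_mulVec, dotProduct_mulVec, conjTranspose_eq_transpose_of_trivial,
      vecMul_transpose]
  have hbound (z : n → ℝ) : X *ᵥ z ⬝ᵥ X *ᵥ z ≤ t * (Y *ᵥ z ⬝ᵥ Y *ᵥ z) := by
    rw [← hAY, ← hquad]
    exact hle _
  have ht : 1 < t := by
    by_contra! ht
    have := hbound z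
    have : 0 ≤ Y *ᵥ z ⬝ᵥ Y *ᵥ z := by simpa using dotProduct_star_self_nonneg (Y *ᵥ z)
    nlinarith
  obtain ⟨σ, hσ0, rfl⟩ : ∃ σ, 0 ≤ σ ∧ σ ^ 2 = t :=
    ⟨√t, Real.sqrt_nonneg t, Real.sq_sqrt (by linarith)⟩
  have hσ : 1 < σ := by nlinarith
  have hXAw : X *ᵥ (A *ᵥ w) = σ ^ 2 • Y *ᵥ w := by
    have hAh : Aᴴ = Y⁻¹ * X := by
      rw [conjTranspose_mul, hX.eq, hY.isHermitian.inv.eq]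
    calc X *ᵥ (A *ᵥ w) = (Y * Y⁻¹) *ᵥ (X *ᵥ (A *ᵥ w)) := by
          rw [mul_nonsing_inv _ hYdet, one_mulVec]
      _ = Y *ᵥ ((Aᴴ * A) *ᵥ w) := by simp only [hAh, mulVec_mulVec, Matrix.mul_assoc]
      _ = σ ^ 2 • Y *ᵥ w := by rw [hAw, mulVec_smul]
  refine ⟨σ, hσ, σ⁻¹ • A *ᵥ w, w, ?_, hw, ?_, hbound⟩
  · rw [smul_dotProduct, dotProduct_smul, ← hquad, hAw, dotProduct_smul, hw, smul_eq_mul,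
      smul_eq_mul, smul_eq_mul]
    field_simp
  · rw [mulVec_smul, hXAw, smul_smul]
    field_simp

lemma dotProduct_mulVec_le_of_mulVec_eq_smul [DecidableEq n] (hX : X.PosSemidef)
    (hY : Y.PosSemidef) {σ : ℝ} (hσ : 0 < σ) {u w : n → ℝ} (hXu : X *ᵥ u = σ • Y *ᵥ w)
    (h : ∀ z, X *ᵥ z ⬝ᵥ X *ᵥ z ≤ σ ^ 2 * (Y *ᵥ z ⬝ᵥ Y *ᵥ z)) :
    w ⬝ᵥ Y *ᵥ w ≤ u ⬝ᵥ Y *ᵥ w := by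
  have hXσY : (σ • Y - X).PosSemidef := by
    refine posSemidef_sub_of_forall_mulVec_dotProduct_le hX.isHermitian (hY.smul hσ.le) ?_
    intro z
    simpa [smul_mulVec, smul_dotProduct, dotProduct_smul, ← mul_assoc, ← sq] using h z
  have hXw : w ⬝ᵥ X *ᵥ w ≤ σ * (w ⬝ᵥ Y *ᵥ w) := by
    simpa [sub_mulVec, smul_mulVec] using hXσY.dotProduct_mulVec_nonneg w
  have hcs := hX.dotProduct_mulVec_sq_le w u
  have hXuu := hX.dotProduct_mulVec_nonneg u
  have hYw := hY.dotProduct_mulVec_nonneg w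
  simp only [star_trivial, hXu, dotProduct_smul, smul_eq_mul] at hcs hXuu hYw
  have hcs' := hcs.trans (mul_le_mul_of_nonneg_right hXw hXuu)
  by_contra! hlt
  nlinarith [mul_lt_mul_of_pos_left hlt hσ]

end Matrix

theorem Continuous.integrable_of_ae_mem_isCompact {α E : Type*} [TopologicalSpace α]
    [T2Space α] [MeasurableSpace α] [OpensMeasurableSpace α] [NormedAddCommGroup E]
    {μ : Measure α} [IsFiniteMeasure μ] {f : α → E} {K : Set α} (hf : Continuous f)
    (hK : IsCompact K) (h : ∀ᵐ x ∂μ, x ∈ K) : Integrable f μ := by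
  rw [← Measure.restrict_eq_self_of_ae_mem h]
  exact hf.continuousOn.integrableOn_compact hK

section

variable {d : ℕ}

lemma enorm'_eq_norm (v : Fin d → ℝ) : enorm' v = ‖WithLp.toLp 2 v‖ := by
  simp [enorm', EuclideanSpace.norm_eq]

lemma enorm'_eq_sqrt_dotProduct (v : Fin d → ℝ) : enorm' v = √(v ⬝ᵥ v) := by
  simp [enorm', dotProduct, sq]

lemma continuous_enorm' : Continuous (enorm' : (Fin d → ℝ) → ℝ) := by
  unfold enorm'; fun_prop

lemma isCompact_setOf_enorm'_le (R : ℝ) : IsCompact {x : Fin d → ℝ | enorm' x ≤ R} := by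
  have := (isCompact_closedBall (0 : EuclideanSpace ℝ (Fin d)) R).image (PiLp.continuous_ofLp 2 _)
  convert this using 1
  ext x
  simp only [Set.mem_ofPred_eq, enorm'_eq_norm, Set.mem_image, Metric.mem_closedBall,
    dist_zero_right]
  exact ⟨fun h => ⟨_, h, rfl⟩, by rintro ⟨y, hy, rfl⟩; simpa using hy⟩

lemma one_add_mul_enorm'_pos {γ : ℝ} (hγ : 0 ≤ γ) (v : Fin d → ℝ) : 0 < 1 + γ * enorm' v := by
  unfold enorm'; positivity

variable {p : Measure (Fin d → ℝ)}

lemma integrable_of_continuous [IsFiniteMeasure p] (hp : ∃ R : ℝ, ∀ᵐ x ∂p, enorm' x ≤ R)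
    {f : (Fin d → ℝ) → ℝ} (hf : Continuous f) : Integrable f p :=
  let ⟨R, hR⟩ := hp
  hf.integrable_of_ae_mem_isCompact (isCompact_setOf_enorm'_le R) hR

lemma dotProduct_mExp_mulVec {f : (Fin d → ℝ) → Matrix (Fin d) (Fin d) ℝ}
    (hf : ∀ i j, Integrable (fun x => f x i j) p) (v : Fin d → ℝ) :
    v ⬝ᵥ mExp p f *ᵥ v = ∫ x, v ⬝ᵥ f x *ᵥ v ∂p := by
  have hint (i j : Fin d) : Integrable (fun x => v i * (f x i j * v j)) p :=
    ((hf i j).mul_const _).const_mul _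
  simp only [dotProduct, mulVec, mExp, of_apply, Finset.mul_sum]
  rw [integral_finsetSum _ fun i _ => integrable_finsetSum _ fun j _ => hint i j]
  refine Finset.sum_congr rfl fun i _ => ?_
  rw [integral_finsetSum _ fun j _ => hint i j]
  refine Finset.sum_congr rfl fun j _ => ?_
  rw [integral_const_mul, integral_mul_const]

lemma continuous_inv_one_add_mul_enorm'_mulVec {γ : ℝ} (hγ : 0 ≤ γ)
    (M : Matrix (Fin d) (Fin d) ℝ) : Continuous fun x => (1 + γ * enorm' (M *ᵥ x))⁻¹ := by
  have := continuous_enorm' (d := d)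
  exact Continuous.inv₀ (by fun_prop) fun x => (one_add_mul_enorm'_pos hγ _).ne'

lemma dotProduct_FJDP_mulVec [IsFiniteMeasure p] (hp : ∃ R : ℝ, ∀ᵐ x ∂p, enorm' x ≤ R)
    {γ : ℝ} (hγ : 0 ≤ γ) (lam : ℝ) (M : Matrix (Fin d) (Fin d) ℝ) (v : Fin d → ℝ) :
    v ⬝ᵥ FJDP p γ lam M *ᵥ v =
      ∫ x, (1 + γ * enorm' (M *ᵥ x))⁻¹ * (v ⬝ᵥ M *ᵥ x) ^ 2 ∂p + lam * (v ⬝ᵥ M *ᵥ v) := by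
  have := continuous_inv_one_add_mul_enorm'_mulVec hγ M
  rw [FJDP, add_mulVec, dotProduct_add, smul_mulVec, dotProduct_smul, smul_eq_mul,
    dotProduct_mExp_mulVec]
  · congr 2 with x
    simp [smul_mulVec, vecMulVec_mulVec, dotProduct_comm (M *ᵥ x) v, sq]
  · intro i j
    refine integrable_of_continuous hp ?_
    simp only [Matrix.smul_apply, vecMulVec_apply, smul_eq_mul]
    fun_prop

lemma mul_dotProduct_FJDP_mulVec_le [IsFiniteMeasure p] (hp : ∃ R : ℝ, ∀ᵐ x ∂p, enorm' x ≤ R)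
    {γ lam : ℝ} (hγ : 0 ≤ γ) (hlam : 0 ≤ lam) {X Y : Matrix (Fin d) (Fin d) ℝ}
    (hX : X.PosSemidef) (hY : Y.PosSemidef) {σ : ℝ} (hσ : 1 ≤ σ) {u w : Fin d → ℝ}
    (hXu : X *ᵥ u = σ • Y *ᵥ w) (h : ∀ z, X *ᵥ z ⬝ᵥ X *ᵥ z ≤ σ ^ 2 * (Y *ᵥ z ⬝ᵥ Y *ᵥ z)) :
    σ * (w ⬝ᵥ FJDP p γ lam Y *ᵥ w) ≤ u ⬝ᵥ FJDP p γ lam X *ᵥ u := by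
  have hnorm (x : Fin d → ℝ) : enorm' (X *ᵥ x) ≤ σ * enorm' (Y *ᵥ x) := by
    rw [enorm'_eq_sqrt_dotProduct, enorm'_eq_sqrt_dotProduct,
      ← Real.sqrt_sq (by linarith : 0 ≤ σ), ← Real.sqrt_mul (sq_nonneg σ)]
    exact Real.sqrt_le_sqrt (h x)
  have hpoint (x : Fin d → ℝ) : σ * ((1 + γ * enorm' (Y *ᵥ x))⁻¹ * (w ⬝ᵥ Y *ᵥ x) ^ 2) ≤
      (1 + γ * enorm' (X *ᵥ x))⁻¹ * (u ⬝ᵥ X *ᵥ x) ^ 2 := by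
    have huX : u ⬝ᵥ X *ᵥ x = σ * (w ⬝ᵥ Y *ᵥ x) := by
      rw [hX.isHermitian.dotProduct_mulVec_comm, hXu, smul_dotProduct, smul_eq_mul,
        ← hY.isHermitian.dotProduct_mulVec_comm]
    have hY0 := one_add_mul_enorm'_pos hγ (Y *ᵥ x)
    have hden : 1 + γ * enorm' (X *ᵥ x) ≤ σ * (1 + γ * enorm' (Y *ᵥ x)) := by
      nlinarith [mul_le_mul_of_nonneg_left (hnorm x) hγ]
    calc σ * ((1 + γ * enorm' (Y *ᵥ x))⁻¹ * (w ⬝ᵥ Y *ᵥ x) ^ 2)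
        = (σ * (1 + γ * enorm' (Y *ᵥ x)))⁻¹ * (σ * (w ⬝ᵥ Y *ᵥ x)) ^ 2 := by
          field_simp
      _ ≤ (1 + γ * enorm' (X *ᵥ x))⁻¹ * (u ⬝ᵥ X *ᵥ x) ^ 2 := by
          rw [huX]
          gcongr
          exact one_add_mul_enorm'_pos hγ _
  have hlin := dotProduct_mulVec_le_of_mulVec_eq_smul hX hY (by linarith) hXu h
  have hcontX := continuous_inv_one_add_mul_enorm'_mulVec hγ X
  have hcontY := continuous_inv_one_add_mul_enorm'_mulVec hγ Y
  rw [dotProduct_FJDP_mulVec hp hγ, dotProduct_FJDP_mulVec hp hγ, mul_add, ← integral_const_mul,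
    hXu, dotProduct_smul, smul_eq_mul]
  gcongr ?_ + ?_
  · exact integral_mono (integrable_of_continuous hp (by fun_prop))
      (integrable_of_continuous hp (by fun_prop)) hpoint
  · have := mul_le_mul_of_nonneg_left hlin (mul_nonneg hlam (by linarith : (0 : ℝ) ≤ σ))
    linarith

lemma posSemidef_sq_sub_sq_of_FJDP_le_one_le [IsFiniteMeasure p]
    (hp : ∃ R : ℝ, ∀ᵐ x ∂p, enorm' x ≤ R) {γ lam : ℝ} (hγ : 0 ≤ γ) (hlam : 0 ≤ lam)
    {X Y : Matrix (Fin d) (Fin d) ℝ} (hX : X.PosSemidef) (hY : Y.PosDef)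
    (hXI : ∀ v, v ⬝ᵥ FJDP p γ lam X *ᵥ v ≤ v ⬝ᵥ v)
    (hYI : ∀ v, v ⬝ᵥ v ≤ v ⬝ᵥ FJDP p γ lam Y *ᵥ v) :
    (Y ^ 2 - X ^ 2).PosSemidef := by
  by_cases h : ∀ z, X *ᵥ z ⬝ᵥ X *ᵥ z ≤ Y *ᵥ z ⬝ᵥ Y *ᵥ z
  · exact posSemidef_sq_sub_sq_of_forall_mulVec_dotProduct_le hX.isHermitian hY.isHermitian h
  push Not at h
  obtain ⟨σ, hσ, u, w, hu, hw, hXu, hbound⟩ :=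
    exists_mulVec_eq_smul_mulVec_of_exists_lt hX.isHermitian hY h
  have : σ ≤ 1 := calc
    σ = σ * (w ⬝ᵥ w) := by rw [hw, mul_one]
    _ ≤ σ * (w ⬝ᵥ FJDP p γ lam Y *ᵥ w) := by gcongr; exact hYI w
    _ ≤ u ⬝ᵥ FJDP p γ lam X *ᵥ u :=
      mul_dotProduct_FJDP_mulVec_le hp hγ hlam hX hY.posSemidef hσ.le hXu hbound
    _ ≤ 1 := hu ▸ hXI u
  linarith

lemma mul_dotProduct_FJDP_mulVec_le_smul [IsFiniteMeasure p]
    (hp : ∃ R : ℝ, ∀ᵐ x ∂p, enorm' x ≤ R) {γ lam : ℝ} (hγ : 0 ≤ γ) (hlam : 0 ≤ lam)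
    {M : Matrix (Fin d) (Fin d) ℝ} (hM : M.PosSemidef) {c : ℝ} (hc : 1 ≤ c) (v : Fin d → ℝ) :
    c * (v ⬝ᵥ FJDP p γ lam M *ᵥ v) ≤ v ⬝ᵥ FJDP p γ lam (c • M) *ᵥ v :=
  mul_dotProduct_FJDP_mulVec_le hp hγ hlam (hM.smul (by linarith)) hM hc (smul_mulVec ..)
    fun z => le_of_eq (by
      simp only [smul_mulVec, smul_dotProduct, dotProduct_smul, smul_eq_mul]
      ring)

end

theorem stmt18_general {d : ℕ} (p : Measure (Fin d → ℝ)) [IsProbabilityMeasure p]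
    (hbdd : ∃ R : ℝ, ∀ᵐ x ∂p, enorm' x ≤ R)
    (lam γ : ℝ) (hlam : 0 < lam) (hγ : 0 ≤ γ)
    (W : Matrix (Fin d) (Fin d) ℝ) (hW : W.PosDef)
    (hlow : (FJDP p γ lam W - (1/2 : ℝ) • (1 : Matrix (Fin d) (Fin d) ℝ)).PosSemidef)
    (hupp : ((2 : ℝ) • (1 : Matrix (Fin d) (Fin d) ℝ) - FJDP p γ lam W).PosSemidef)
    (Wstar : Matrix (Fin d) (Fin d) ℝ) (hWs : Wstar.PosDef)
    (hfix : FJDP p γ lam Wstar = 1) :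
    (Wstar^2 - (1/4 : ℝ) • W^2).PosSemidef
    ∧ ((4 : ℝ) • W^2 - Wstar^2).PosSemidef := by
  have hWlow (v : Fin d → ℝ) : v ⬝ᵥ v ≤ 2 * (v ⬝ᵥ FJDP p γ lam W *ᵥ v) := by
    have := dotProduct_mulVec_le_of_posSemidef_sub hlow v
    simp only [smul_mulVec, one_mulVec, dotProduct_smul, smul_eq_mul] at this
    linarith
  have hWupp (v : Fin d → ℝ) : v ⬝ᵥ FJDP p γ lam W *ᵥ v ≤ 2 * (v ⬝ᵥ v) := by
    simpa [smul_mulVec] using dotProduct_mulVec_le_of_posSemidef_sub hupp v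
  have hWstar (v : Fin d → ℝ) : v ⬝ᵥ FJDP p γ lam Wstar *ᵥ v = v ⬝ᵥ v := by
    rw [hfix, one_mulVec]
  have hW2 : (2 : ℝ) • (1 / 2 : ℝ) • W = W := by rw [smul_smul]; norm_num
  constructor
  · have hhalf := hW.posSemidef.smul (by norm_num : (0 : ℝ) ≤ 1 / 2)
    have := posSemidef_sq_sub_sq_of_FJDP_le_one_le hbdd hγ hlam.le hhalf hWs
      (fun v => by
        have := mul_dotProduct_FJDP_mulVec_le_smul hbdd hγ hlam.le hhalf one_le_two v
        rw [hW2] at this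
        linarith [hWupp v])
      fun v => (hWstar v).ge
    rwa [smul_pow, show ((1 / 2 : ℝ)) ^ 2 = 1 / 4 by norm_num] at this
  · have := posSemidef_sq_sub_sq_of_FJDP_le_one_le hbdd hγ hlam.le hWs.posSemidef (hW.smul two_pos)
      (fun v => (hWstar v).le)
      fun v => by
        linarith [hWlow v,
          mul_dotProduct_FJDP_mulVec_le_smul hbdd hγ hlam.le hW.posSemidef one_le_two v]
    rwa [smul_pow, show (2 : ℝ) ^ 2 = 4 by norm_num] at this

/-- If `(1/2)I ⪯ FJDP(W) ⪯ 2I`, then `(1/4)W² ⪯ (W*)² ⪯ 4W²`. -/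
theorem stmt18 {d : ℕ} (p : Measure (Fin d → ℝ)) [IsProbabilityMeasure p]
    (hbdd : ∃ R : ℝ, ∀ᵐ x ∂p, enorm' x ≤ R)
    (lam γ : ℝ) (hlam : 0 < lam) (hγ : 0 ≤ γ)
    (W : Matrix (Fin d) (Fin d) ℝ) (hW : W.PosDef)
    (hlow : (FJDP p γ lam W - (1/2 : ℝ) • (1 : Matrix (Fin d) (Fin d) ℝ)).PosSemidef)
    (hupp : ((2 : ℝ) • (1 : Matrix (Fin d) (Fin d) ℝ) - FJDP p γ lam W).PosSemidef)
    (Wstar : Matrix (Fin d) (Fin d) ℝ) (hWs : Wstar.PosDef)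
    (hfix : FJDP p γ lam Wstar = 1)
    (huniq : ∀ W' : Matrix (Fin d) (Fin d) ℝ, W'.PosDef → FJDP p γ lam W' = 1 → W' = Wstar) :
    (Wstar^2 - (1/4 : ℝ) • W^2).PosSemidef
    ∧ ((4 : ℝ) • W^2 - Wstar^2).PosSemidef :=
  stmt18_general p hbdd lam γ hlam hγ W hW hlow hupp Wstar hWs hfix
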